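/- Suppose U is a p-point ultrafilter over κ and for each α < κ, U_α is a p-point ultrafilter over δ_α where π_U(α) < δ_α < κ on a U-large set (π_U representing κ in the ultrapower M_U). Then any ultrafilter W over κ that is Rudin-Keisler equivalent to ∑_U U_α is itself a p-point. -/

import Mathlib

open Cardinal Set

universe u v

/-- `W` is a `κ`-complete ultrafilter. -/
def CComplete {β : Type u} (κ : Cardinal.{0}) (W : Ultrafilter β) : Prop :=
  ∀ (ι : Type) (f : ι → Set β), #ι < κ → (∀ i, f i ∈ W) → (⋂ i, f i) ∈ W

/-- `W` is a p-point ultrafilter: every function which is not constant mod `W` is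
almost one-to-one mod `W`. -/
def IsPPoint {β : Type u} [LinearOrder β] (W : Ultrafilter β) : Prop :=
  ∀ f : β → β, (¬ ∃ c, {x | f x = c} ∈ W) →
    ∃ X ∈ W, ∀ γ : β, ∃ b : β, ∀ x ∈ X, f x < γ → x ≤ b

/-- `V` is a p-point ultrafilter over `δ_α`, i.e. over the initial segment `Iio d`:
`V` concentrates on `Iio d` and every function `Iio d → Iio d` which is not constant
mod `V` is almost one-to-one mod `V` (with bounds below `d`). -/
def IsPPointBelow {β : Type u} [LinearOrder β] (V : Ultrafilter β) (d : β) : Prop :=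
  Set.Iio d ∈ V ∧
    ∀ f : β → β, {x | f x < d} ∈ V → (¬ ∃ c, {x | f x = c} ∈ V) →
      ∃ X ∈ V, ∀ γ : β, γ < d → ∃ b : β, b < d ∧ ∀ x ∈ X, f x < γ → x ≤ b

/-- The `U`-sum `∑_U U_α` of the ultrafilters `Us α`. -/
def sumUf {α : Type u} {β : Type v} (U : Ultrafilter α) (Us : α → Ultrafilter β) :
    Ultrafilter (α × β) :=
  U.bind fun a => (Us a).map (Prod.mk a)

/-- The Rudin–Keisler order and equivalence. -/
def RKle {α : Type u} {β : Type v} (U : Ultrafilter α) (W : Ultrafilter β) : Prop :=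
  ∃ g : β → α, U = W.map g

def RKequiv {α : Type u} {β : Type v} (U : Ultrafilter α) (W : Ultrafilter β) : Prop :=
  RKle U W ∧ RKle W U

/-- Membership in a `U`-sum. -/
theorem mem_sumUf {α : Type u} {β : Type v} (U : Ultrafilter α) (Us : α → Ultrafilter β)
    (Y : Set (α × β)) : Y ∈ sumUf U Us ↔ {a | {b | (a, b) ∈ Y} ∈ Us a} ∈ U := Iff.rfl

/-- A set of cardinality less than `κ` does not belong to a `κ`-complete nonprincipal
ultrafilter. -/
theorem small_not_mem {β : Type} (κ : Cardinal.{0}) (V : Ultrafilter β)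
    (hcc : CComplete κ V) (hnp : ∀ x, V ≠ (pure x : Ultrafilter β))
    {A : Set β} (hA : #A < κ) : A ∉ V := by
  intro hAV
  have h1 : ∀ x : A, ({(x : β)}ᶜ : Set β) ∈ V := by
    intro x
    rw [Ultrafilter.compl_mem_iff_notMem]
    intro hs
    obtain ⟨a, _, hpa⟩ := Ultrafilter.eq_pure_of_finite_mem (finite_singleton _) hs
    exact hnp a hpa
  have h2 := hcc A (fun x => ({(x : β)}ᶜ : Set β)) hA h1
  have h3 : (⋂ x : A, ({(x : β)}ᶜ : Set β)) = Aᶜ := by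
    ext y
    simp only [mem_iInter, mem_compl_iff, mem_singleton_iff]
    constructor
    · intro h hy
      exact h ⟨y, hy⟩ rfl
    · intro h x he
      exact h (he ▸ x.2)
  rw [h3] at h2
  exact (Ultrafilter.compl_mem_iff_notMem.1 h2) hAV

/-- Any set of cardinality less than `κ` is bounded, provided there is a `κ`-complete
nonprincipal ultrafilter and all initial segments are small. -/
theorem small_bounded {β : Type} [LinearOrder β] [Nonempty β] (κ : Cardinal.{0})
    (V : Ultrafilter β) (hcc : CComplete κ V) (hnp : ∀ x, V ≠ (pure x : Ultrafilter β))
    (hIio : ∀ b : β, #(Iio b) < κ) {A : Set β} (hA : #A < κ) :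
    ∃ b, ∀ x ∈ A, x ≤ b := by
  by_contra h
  push_neg at h
  have h1 : ∀ x : A, ((Iio (x : β))ᶜ : Set β) ∈ V := fun x =>
    Ultrafilter.compl_mem_iff_notMem.2 (small_not_mem κ V hcc hnp (hIio x))
  have h2 := hcc A (fun x => ((Iio (x : β))ᶜ : Set β)) hA h1
  have h3 : (⋂ x : A, ((Iio (x : β))ᶜ : Set β)) = ∅ := by
    ext y
    simp only [mem_iInter, mem_compl_iff, mem_Iio, not_lt, mem_empty_iff_false, iff_false,
      not_forall]
    obtain ⟨x, hxA, hyx⟩ := h y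
    exact ⟨⟨x, hxA⟩, not_le.2 hyx⟩
  rw [h3] at h2
  exact Ultrafilter.empty_notMem h2

/-- suppose `U` is a `κ`-complete p-point ultrafilter over the measurable
cardinal `κ`, `π = π_U : κ → κ` represents `κ` in the ultrapower `M_U` (as a germ: the
least germ strictly above all constant germs), and for each `α < κ`, `U_α` is a
`κ`-complete p-point ultrafilter over `δ_α`, where `π_U(α) < δ_α < κ` on a `U`-large
set.  Then any ultrafilter `W` over `κ` which is Rudin–Keisler equivalent to `∑_U U_α`
is itself a p-point. -/
theorem stmt7 (κ : Cardinal.{0}) (hκ : ℵ₀ < κ)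
    (U : Ultrafilter κ.ord.ToType) (hUcc : CComplete κ U) (hUpp : IsPPoint U)
    (hUnp : ∀ x, U ≠ (pure x : Ultrafilter _))
    (π : κ.ord.ToType → κ.ord.ToType)
    (hπ₁ : ∀ c : κ.ord.ToType,
      (Filter.Germ.ofFun (fun _ => c) : Filter.Germ (↑U) κ.ord.ToType) < .ofFun π)
    (hπ₂ : ∀ h : κ.ord.ToType → κ.ord.ToType,
      (∀ c : κ.ord.ToType,
        (Filter.Germ.ofFun (fun _ => c) : Filter.Germ (↑U) κ.ord.ToType) < .ofFun h) →
      (Filter.Germ.ofFun π : Filter.Germ (↑U) κ.ord.ToType) ≤ .ofFun h)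
    (δ : κ.ord.ToType → κ.ord.ToType)
    (hδ : {a | π a < δ a} ∈ U)
    (Us : κ.ord.ToType → Ultrafilter κ.ord.ToType)
    (hUscc : ∀ a, CComplete κ (Us a))
    (hUspp : ∀ a, IsPPointBelow (Us a) (δ a))
    (W : Ultrafilter κ.ord.ToType) (hRK : RKequiv W (sumUf U Us)) :
    IsPPoint W := by
  classical
  haveI : Nonempty κ.ord.ToType := Ordinal.toType_nonempty_iff_ne_zero.2 (by
    intro h
    rw [Cardinal.ord_eq_zero] at h
    subst h
    exact absurd hκ (by simp))
  have hIio : ∀ b : κ.ord.ToType, #(Iio b) < κ := fun b => Cardinal.mk_Iio_ord_toType b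
  have hIic : ∀ b : κ.ord.ToType, #(Iic b) < κ := by
    intro b
    have h1 : (Iic b : Set κ.ord.ToType) ⊆ insert b (Iio b) := by
      intro x hx
      rcases eq_or_lt_of_le (mem_Iic.1 hx) with h | h
      · exact Or.inl h
      · exact Or.inr h
    refine lt_of_le_of_lt ((mk_le_mk_of_subset h1).trans mk_insert_le) ?_
    exact Cardinal.add_lt_of_lt hκ.le (hIio b) (lt_trans one_lt_aleph0 hκ)
  have hbdd : ∀ {A : Set κ.ord.ToType}, #A < κ → ∃ b, ∀ x ∈ A, x ≤ b :=
    fun hA => small_bounded κ U hUcc hUnp hIio hA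
  intro f hf
  obtain ⟨g, hg⟩ := hRK.1
  -- `F := f ∘ g` is not constant mod the sum
  have hFnc : ¬ ∃ c, {p : κ.ord.ToType × κ.ord.ToType | f (g p) = c} ∈ sumUf U Us := by
    rintro ⟨c, hc⟩
    exact hf ⟨c, by rw [hg]; exact Ultrafilter.mem_map.2 hc⟩
  -- the key construction
  suffices P : ∃ E ∈ U, ∃ Ya : κ.ord.ToType → Set κ.ord.ToType, (∀ a ∈ E, Ya a ∈ Us a) ∧
      (∀ a ∈ E, Ya a ⊆ Iio (δ a)) ∧
      ∀ γ : κ.ord.ToType, ∃ b₀ : κ.ord.ToType,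
        ∀ a ∈ E, ∀ b ∈ Ya a, f (g (a, b)) < γ → a ≤ b₀ by
    obtain ⟨E, hE, Ya, hYmem, hYsub, hYbd⟩ := P
    set Y : Set (κ.ord.ToType × κ.ord.ToType) := {p | p.1 ∈ E ∧ p.2 ∈ Ya p.1} with hYdef
    have hYS : Y ∈ sumUf U Us := by
      rw [mem_sumUf]
      refine Filter.mem_of_superset hE ?_
      intro a ha
      have h4 : {b | (a, b) ∈ Y} = Ya a := by
        ext b; simp [hYdef, ha]
      rw [mem_setOf_eq, h4]
      exact hYmem a ha
    refine ⟨g '' Y, ?_, ?_⟩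
    · rw [hg]
      exact Ultrafilter.mem_map.2 (Filter.mem_of_superset hYS (subset_preimage_image g Y))
    · intro γ
      obtain ⟨b₀, hb₀⟩ := hYbd γ
      obtain ⟨d₀, hd₀⟩ := hbdd (lt_of_le_of_lt mk_image_le (hIic b₀) :
        #(δ '' Iic b₀ : Set κ.ord.ToType) < κ)
      have hsub : Y ∩ {p : κ.ord.ToType × κ.ord.ToType | f (g p) < γ} ⊆ Iic b₀ ×ˢ Iio d₀ := by
        rintro ⟨a, b⟩ ⟨⟨haE, hbY⟩, hFlt⟩
        have ha : a ≤ b₀ := hb₀ a haE b hbY hFlt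
        exact ⟨ha, lt_of_lt_of_le (hYsub a haE hbY) (hd₀ (δ a) ⟨a, ha, rfl⟩)⟩
      have hprod : #(Iic b₀ ×ˢ Iio d₀ : Set (κ.ord.ToType × κ.ord.ToType)) < κ := by
        rw [Cardinal.mk_congr (Equiv.Set.prod _ _), Cardinal.mk_prod, Cardinal.lift_id,
          Cardinal.lift_id]
        exact Cardinal.mul_lt_of_lt hκ.le (hIic b₀) (hIio d₀)
      have hcard : #(g '' (Y ∩ {p : κ.ord.ToType × κ.ord.ToType | f (g p) < γ}) :
          Set κ.ord.ToType) < κ :=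
        lt_of_le_of_lt mk_image_le (lt_of_le_of_lt (mk_le_mk_of_subset hsub) hprod)
      obtain ⟨b, hb⟩ := hbdd hcard
      refine ⟨b, ?_⟩
      rintro x ⟨p, hp, rfl⟩ hlt
      exact hb _ ⟨p, ⟨hp, hlt⟩, rfl⟩
  -- case split: the fibre function is constant mod `Us a` on a `U`-large set or not
  by_cases hT1 : {a : κ.ord.ToType | ∃ c₀, {b | f (g (a, b)) = c₀} ∈ Us a} ∈ U
  · -- Case 1: fibrewise constant
    set c : κ.ord.ToType → κ.ord.ToType := fun a =>
      if h : ∃ c₀, {b | f (g (a, b)) = c₀} ∈ Us a then h.choose else Classical.arbitrary _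
      with hcdef
    have hc : ∀ a, (∃ c₀, {b | f (g (a, b)) = c₀} ∈ Us a) →
        {b | f (g (a, b)) = c a} ∈ Us a := by
      intro a ha
      simp only [hcdef, dif_pos ha]
      exact ha.choose_spec
    have hcnc : ¬ ∃ c₀, {a | c a = c₀} ∈ U := by
      rintro ⟨c₀, hc₀⟩
      refine hFnc ⟨c₀, ?_⟩
      rw [mem_sumUf]
      refine Filter.mem_of_superset (Filter.inter_mem hT1 hc₀) ?_
      rintro a ⟨ha1, ha2⟩
      have h5 := hc a ha1
      rw [mem_setOf_eq] at ha2
      rw [ha2] at h5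
      exact h5
    obtain ⟨XU, hXU, hXUb⟩ := hUpp c hcnc
    refine ⟨XU ∩ {a | ∃ c₀, {b | f (g (a, b)) = c₀} ∈ Us a},
      Filter.inter_mem hXU hT1,
      fun a => {b | f (g (a, b)) = c a} ∩ Iio (δ a), ?_, ?_, ?_⟩
    · rintro a ⟨_, ha2⟩
      exact Filter.inter_mem (hc a ha2) (hUspp a).1
    · rintro a _ b hb
      exact hb.2
    · intro γ
      obtain ⟨b₀, hb₀⟩ := hXUb γ
      refine ⟨b₀, ?_⟩
      rintro a ⟨ha1, _⟩ b hb hlt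
      have h6 : c a < γ := by
        have h7 := hb.1
        rw [mem_setOf_eq] at h7
        rw [← h7]
        exact hlt
      exact hb₀ a ha1 h6
  · -- Case 2: fibrewise nonconstant
    have hT1c : {a : κ.ord.ToType | ¬ ∃ c₀, {b | f (g (a, b)) = c₀} ∈ Us a} ∈ U := by
      rw [← Ultrafilter.compl_mem_iff_notMem] at hT1
      simpa [compl_setOf] using hT1
    -- π is not constant mod U
    have hπnc : ¬ ∃ c₀, {a | π a = c₀} ∈ U := by
      rintro ⟨c₀, hc₀⟩
      have heq : (Filter.Germ.ofFun (fun _ => c₀) : Filter.Germ (↑U) κ.ord.ToType)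
          = .ofFun π := by
        apply Filter.Germ.coe_eq.2
        exact Filter.mem_of_superset hc₀ (fun a ha => (ha : π a = c₀).symm)
      have h8 := hπ₁ c₀
      rw [heq] at h8
      exact lt_irrefl _ h8
    obtain ⟨Xπ, hXπ, hXπb⟩ := hUpp π hπnc
    -- on the relevant large set, choose fibre sets on which `F ≥ π`
    have key : ∀ a, a ∈ Xπ ∩ ({a : κ.ord.ToType | ¬ ∃ c₀, {b | f (g (a, b)) = c₀} ∈ Us a} ∩
        {a | π a < δ a}) →
        ∃ Z, Z ∈ Us a ∧ Z ⊆ Iio (δ a) ∧ ∀ b ∈ Z, π a ≤ f (g (a, b)) := by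
      rintro a ⟨_, hanc, haδ⟩
      have haδ' : π a < δ a := haδ
      have hanc' : ¬ ∃ c₀, {b | f (g (a, b)) = c₀} ∈ Us a := hanc
      have hnp_a : ∀ x, Us a ≠ (pure x : Ultrafilter κ.ord.ToType) := by
        intro x hx
        refine hanc' ⟨f (g (a, x)), ?_⟩
        rw [hx]
        exact Ultrafilter.mem_pure.2 rfl
      rcases (Us a).mem_or_compl_mem {b | f (g (a, b)) < δ a} with h1 | h1
      · obtain ⟨Xa, hXa, hXab⟩ := (hUspp a).2 (fun b => f (g (a, b))) h1 hanc'
        obtain ⟨bd, _, hbd⟩ := hXab (π a) haδ'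
        have hIc : ((Iic bd)ᶜ : Set κ.ord.ToType) ∈ Us a :=
          Ultrafilter.compl_mem_iff_notMem.2
            (small_not_mem κ (Us a) (hUscc a) hnp_a (hIic bd))
        refine ⟨Xa ∩ Iio (δ a) ∩ (Iic bd)ᶜ,
          Filter.inter_mem (Filter.inter_mem hXa (hUspp a).1) hIc,
          fun b hb => hb.1.2, ?_⟩
        rintro b ⟨⟨hbXa, _⟩, hbc⟩
        by_contra hlt
        push_neg at hlt
        exact hbc (hbd b hbXa hlt)
      · refine ⟨Iio (δ a) ∩ ({b | f (g (a, b)) < δ a})ᶜ,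
          Filter.inter_mem (hUspp a).1 h1, fun b hb => hb.1, ?_⟩
        rintro b ⟨_, hb2⟩
        have h9 : δ a ≤ f (g (a, b)) := not_lt.1 hb2
        exact haδ'.le.trans h9
    choose! Z hZmem hZsub hZbd using key
    refine ⟨Xπ ∩ ({a : κ.ord.ToType | ¬ ∃ c₀, {b | f (g (a, b)) = c₀} ∈ Us a} ∩
      {a | π a < δ a}),
      Filter.inter_mem hXπ (Filter.inter_mem hT1c hδ), Z, ?_, ?_, ?_⟩
    · intro a ha; exact (hZmem a ha)
    · intro a ha; exact (hZsub a ha)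
    · intro γ
      obtain ⟨b₀, hb₀⟩ := hXπb γ
      refine ⟨b₀, ?_⟩
      intro a ha b hb hlt
      have hπa : π a ≤ f (g (a, b)) := hZbd a ha b hb
      exact hb₀ a ha.1 (lt_of_le_of_lt hπa hlt)
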